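/- Let u : ℝⁿ → ℝ be a C² function satisfying max{δu − Δu − f, |Du| − 1} = 0 pointwise on ℝⁿ, with f : ℝⁿ → ℝ convex and u satisfying lim_{|x|→∞} u(x)/|x| = 1. Then u is convex. -/

import Mathlib

/-!
For `0 < ε < 1` and weights `a + b = 1`, the function
`C^ε(x, y) = ε u(a x + b y) - a u(x) - b u(y)` tends to `-∞` at infinity, because `u` grows like
`|x|` and is `1`-Lipschitz, so it attains its maximum. At a maximizer, `Du(x) = Du(y) = ε Du(z)`
with `z = a x + b y`, so `|Du| < 1` at `x` and `y`, where the equation therefore reads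
`δ u = Δu + f`; the second-order condition along `(v, v)` gives `ε Δu(z) ≤ a Δu(x) + b Δu(y)`.
Together with `δ u(z) ≤ Δu(z) + f(z)` and the convexity of `f` this yields
`δ C^ε ≤ -(1 - ε) f(z) ≤ (1 - ε) sup (-f)`. Here `f` is bounded below since a `1`-Lipschitz function
cannot satisfy `Δu > 4n` on a whole unit ball. Letting `ε → 1` gives convexity.
-/

open Filter
open scoped Topology

/-- The Laplacian as the trace of the Hessian. -/
noncomputable def lap {n : ℕ} (u : EuclideanSpace ℝ (Fin n) → ℝ)
    (x : EuclideanSpace ℝ (Fin n)) : ℝ :=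
  ∑ i, fderiv ℝ (fun y => fderiv ℝ u y (EuclideanSpace.single i (1:ℝ))) x
    (EuclideanSpace.single i (1:ℝ))

open Set Metric

theorem IsLocalMax.second_deriv_nonpos {φ φ' : ℝ → ℝ} {x c : ℝ} (h : IsLocalMax φ x)
    (hφ : ∀ t, HasDerivAt φ (φ' t) t) (hφ' : HasDerivAt φ' c x) : c ≤ 0 := by
  by_contra! hc
  have hderiv : deriv φ = φ' := funext fun t => (hφ t).deriv
  -- `c > 0` makes `x` a local minimum too, so `φ` is constant near `x` and `c = 0`
  have hmin : IsLocalMin φ x :=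
    isLocalMin_of_deriv_deriv_pos (by rwa [hderiv, hφ'.deriv]) h.deriv_eq_zero (hφ x).continuousAt
  have hconst : φ =ᶠ[𝓝 x] fun _ => φ x := (h.and hmin).mono fun y hy => le_antisymm hy.1 hy.2
  have := hconst.deriv.deriv_eq
  simp only [hderiv, hφ'.deriv, deriv_const', deriv_const] at this
  exact hc.ne' this

theorem IsLocalMax.comp_add_smul {F : Type*} [AddCommGroup F] [Module ℝ F] [TopologicalSpace F]
    [ContinuousAdd F] [ContinuousSMul ℝ F] {G : F → ℝ} {p : F} (h : IsLocalMax G p) (q : F) :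
    IsLocalMax (fun s : ℝ => G (p + s • q)) 0 :=
  IsLocalMax.comp_continuous (g := fun s : ℝ => p + s • q) (by simpa using h) (by fun_prop)

theorem norm_gradient {F : Type*} [NormedAddCommGroup F] [InnerProductSpace ℝ F]
    [CompleteSpace F] (u : F → ℝ) (x : F) : ‖gradient u x‖ = ‖fderiv ℝ u x‖ :=
  (InnerProductSpace.toDual ℝ F).symm.norm_map _

section Line

variable {E : Type*} [NormedAddCommGroup E] [NormedSpace ℝ E]

theorem hasDerivAt_comp_add_smul {g : E → ℝ} (hg : Differentiable ℝ g) (x v : E) (t : ℝ) :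
    HasDerivAt (fun s : ℝ => g (x + s • v)) (fderiv ℝ g (x + t • v) v) t :=
  (hg _).hasFDerivAt.comp_hasDerivAt t <| by
    simpa using ((hasDerivAt_id t).smul_const v).const_add x

noncomputable def secondDerivAlong (u : E → ℝ) (v x : E) : ℝ :=
  fderiv ℝ (fun y => fderiv ℝ u y v) x v

theorem ContDiff.differentiable_fderiv_apply {u : E → ℝ} (hu : ContDiff ℝ 2 u) (v : E) :
    Differentiable ℝ (fun y => fderiv ℝ u y v) :=
  ((hu.fderiv_right one_add_one_eq_two.le).differentiable one_ne_zero).clm_apply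
    (differentiable_const v)

end Line

section ConvexityGap

variable {E : Type*} [NormedAddCommGroup E] [NormedSpace ℝ E]

/-- The quantity `C^ε(x, y)` of the maximum-principle argument, with weights `a, b` in place
of `1/2, 1/2`. -/
def convexityGap (g : E → ℝ) (ε a b : ℝ) (p : E × E) : ℝ :=
  ε * g (a • p.1 + b • p.2) - (a * g p.1 + b * g p.2)

variable {u : E → ℝ} {ε a b : ℝ}

theorem convexityGap_add_smul (g : E → ℝ) (p q : E × E) (t : ℝ) :
    convexityGap g ε a b (p + t • q) =
      ε * g (a • p.1 + b • p.2 + t • (a • q.1 + b • q.2)) -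
        (a * g (p.1 + t • q.1) + b * g (p.2 + t • q.2)) := by
  simp only [convexityGap, Prod.fst_add, Prod.snd_add, Prod.smul_fst, Prod.smul_snd]
  congr 3
  module

theorem convexityGap_sum {ι : Type*} (s : Finset ι) (g : ι → E → ℝ) (p : E × E) :
    convexityGap (fun x => ∑ i ∈ s, g i x) ε a b p = ∑ i ∈ s, convexityGap (g i) ε a b p := by
  simp only [convexityGap, Finset.mul_sum, ← Finset.sum_add_distrib, ← Finset.sum_sub_distrib]

theorem hasDerivAt_convexityGap_add_smul {g : E → ℝ} (hg : Differentiable ℝ g) (p q : E × E)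
    (t : ℝ) :
    HasDerivAt (fun s => convexityGap g ε a b (p + s • q))
      (ε * fderiv ℝ g (a • p.1 + b • p.2 + t • (a • q.1 + b • q.2)) (a • q.1 + b • q.2) -
        (a * fderiv ℝ g (p.1 + t • q.1) q.1 + b * fderiv ℝ g (p.2 + t • q.2) q.2)) t := by
  simp_rw [convexityGap_add_smul]
  exact ((hasDerivAt_comp_add_smul hg _ _ t).const_mul ε).sub
    (((hasDerivAt_comp_add_smul hg _ _ t).const_mul a).add
      ((hasDerivAt_comp_add_smul hg _ _ t).const_mul b))

theorem hasDerivAt_convexityGap_add_smul_diag {g : E → ℝ} (hg : Differentiable ℝ g)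
    (hab : a + b = 1) (p : E × E) (v : E) (t : ℝ) :
    HasDerivAt (fun s => convexityGap g ε a b (p + s • (v, v)))
      (convexityGap (fun y => fderiv ℝ g y v) ε a b (p + t • (v, v))) t := by
  convert hasDerivAt_convexityGap_add_smul hg p (v, v) t using 1
  rw [convexityGap_add_smul, ← add_smul, hab, one_smul]

variable {p : E × E}

theorem IsLocalMax.convexityGap_fderiv_eq (h : IsLocalMax (convexityGap u ε a b) p)
    (hu : Differentiable ℝ u) (q : E × E) :
    ε * fderiv ℝ u (a • p.1 + b • p.2) (a • q.1 + b • q.2) =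
      a * fderiv ℝ u p.1 q.1 + b * fderiv ℝ u p.2 q.2 := by
  have := (h.comp_add_smul q).hasDerivAt_eq_zero (hasDerivAt_convexityGap_add_smul hu p q 0)
  simp only [zero_smul, add_zero] at this
  linarith

theorem IsLocalMax.convexityGap_fderiv_fst (h : IsLocalMax (convexityGap u ε a b) p)
    (hu : Differentiable ℝ u) (ha : a ≠ 0) :
    fderiv ℝ u p.1 = ε • fderiv ℝ u (a • p.1 + b • p.2) := by
  ext v
  have := h.convexityGap_fderiv_eq hu (v, 0)
  simp only [smul_zero, add_zero, map_smul, map_zero, mul_zero, smul_eq_mul] at this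
  simp only [smul_apply, smul_eq_mul]
  apply mul_left_cancel₀ ha
  linarith

theorem IsLocalMax.convexityGap_fderiv_snd (h : IsLocalMax (convexityGap u ε a b) p)
    (hu : Differentiable ℝ u) (hb : b ≠ 0) :
    fderiv ℝ u p.2 = ε • fderiv ℝ u (a • p.1 + b • p.2) := by
  ext v
  have := h.convexityGap_fderiv_eq hu (0, v)
  simp only [smul_zero, zero_add, map_smul, map_zero, mul_zero, smul_eq_mul] at this
  simp only [smul_apply, smul_eq_mul]
  apply mul_left_cancel₀ hb
  linarith

theorem IsLocalMax.convexityGap_secondDerivAlong_nonpos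
    (h : IsLocalMax (convexityGap u ε a b) p) (hu : ContDiff ℝ 2 u) (hab : a + b = 1) (v : E) :
    convexityGap (secondDerivAlong u v) ε a b p ≤ 0 := by
  have := (h.comp_add_smul (v, v)).second_deriv_nonpos
    (hasDerivAt_convexityGap_add_smul_diag (hu.differentiable two_ne_zero) hab p v)
    (hasDerivAt_convexityGap_add_smul_diag (hu.differentiable_fderiv_apply v) hab p v 0)
  rwa [zero_smul, add_zero] at this

end ConvexityGap

section Growth

variable {E : Type*} [NormedAddCommGroup E] [ProperSpace E] {u : E → ℝ}

theorem exists_mul_norm_sub_le_of_tendsto_div_norm (hu : Continuous u)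
    (hgrow : Tendsto (fun x => u x / ‖x‖) (cocompact E) (𝓝 1)) {c : ℝ} (hc : c < 1) :
    ∃ C, ∀ x, c * ‖x‖ - C ≤ u x := by
  have hlim : Tendsto (fun x => u x - c * ‖x‖) (cocompact E) atTop := by
    refine (tendsto_norm_cocompact_atTop.atTop_mul_pos (sub_pos.2 hc)
      (hgrow.sub_const c)).congr' ?_
    filter_upwards [tendsto_norm_cocompact_atTop.eventually_gt_atTop 0] with x hx
    field_simp
  obtain ⟨x₀, hx₀⟩ := (by fun_prop : Continuous fun x => u x - c * ‖x‖).exists_forall_le hlim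
  exact ⟨c * ‖x₀‖ - u x₀, fun x => by linarith [hx₀ x]⟩

theorem exists_forall_convexityGap_le [NormedSpace ℝ E] (hu : Continuous u)
    (hlip : LipschitzWith 1 u) {ε a b c C : ℝ} (hlower : ∀ x, c * ‖x‖ - C ≤ u x)
    (hε₀ : 0 ≤ ε) (hεc : ε < c) (ha : 0 < a) (hb : 0 < b) :
    ∃ p, ∀ q, convexityGap u ε a b q ≤ convexityGap u ε a b p := by
  have hk : 0 < (c - ε) * min a b := mul_pos (sub_pos.2 hεc) (lt_min ha hb)
  have hbound : ∀ q : E × E,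
      convexityGap u ε a b q ≤ ε * u 0 + (a + b) * C - (c - ε) * min a b * ‖q‖ := by
    rintro ⟨x, y⟩
    have hz : u (a • x + b • y) ≤ u 0 + (a * ‖x‖ + b * ‖y‖) := by
      have hl := hlip.le_add_mul (a • x + b • y) 0
      have hn := norm_add_le (a • x) (b • y)
      simp only [NNReal.coe_one, one_mul, dist_zero_right, norm_smul, Real.norm_of_nonneg ha.le,
        Real.norm_of_nonneg hb.le] at hl hn
      linarith
    have hmin : min a b * ‖(x, y)‖ ≤ a * ‖x‖ + b * ‖y‖ := by
      rw [Prod.norm_def]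
      rcases le_total ‖x‖ ‖y‖ with h | h
      · rw [max_eq_right h]
        nlinarith [min_le_right a b, norm_nonneg x]
      · rw [max_eq_left h]
        nlinarith [min_le_left a b, norm_nonneg y]
    simp only [convexityGap]
    nlinarith [hlower x, hlower y, mul_le_mul_of_nonneg_left hz hε₀]
  have hcont : Continuous (convexityGap u ε a b) := by unfold convexityGap; fun_prop
  refine hcont.exists_forall_ge (tendsto_atBot_mono hbound ?_)
  exact tendsto_atBot_add_const_left _ _
    (tendsto_neg_atTop_atBot.comp (tendsto_norm_cocompact_atTop.const_mul_atTop hk))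

end Growth

theorem IsLocalMax.secondDerivAlong_le_of_sub_sq_norm {F : Type*} [NormedAddCommGroup F]
    [InnerProductSpace ℝ F] {u : F → ℝ} (hu : ContDiff ℝ 2 u) {a : ℝ} {z p : F}
    (h : IsLocalMax (fun x => u x - a * ‖x - z‖ ^ 2) p) (v : F) :
    secondDerivAlong u v p ≤ 2 * a * ‖v‖ ^ 2 := by
  have hline : ∀ s : ℝ, HasDerivAt (fun s : ℝ => p + s • v - z) v s := fun s => by
    simpa using (((hasDerivAt_id s).smul_const v).const_add p).sub_const z
  have hφ : ∀ s : ℝ, HasDerivAt (fun s : ℝ => u (p + s • v) - a * ‖p + s • v - z‖ ^ 2)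
      (fderiv ℝ u (p + s • v) v - a * (2 * inner ℝ (p + s • v - z) v)) s := fun s =>
    (hasDerivAt_comp_add_smul (hu.differentiable two_ne_zero) p v s).sub
      ((hline s).norm_sq.const_mul a)
  have hφ' := (hasDerivAt_comp_add_smul (hu.differentiable_fderiv_apply v) p v 0).sub
    ((((hline 0).inner ℝ (hasDerivAt_const 0 v)).const_mul 2).const_mul a)
  have := (h.comp_add_smul v).second_deriv_nonpos hφ hφ'
  simp only [zero_smul, add_zero, inner_zero_right, zero_add, real_inner_self_eq_norm_sq] at this
  rw [secondDerivAlong]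
  linarith

section Euclidean

variable {n : ℕ} {u f : EuclideanSpace ℝ (Fin n) → ℝ}

theorem lap_eq_sum_secondDerivAlong (u : EuclideanSpace ℝ (Fin n) → ℝ) :
    lap u = fun x => ∑ i, secondDerivAlong u (EuclideanSpace.single i 1) x :=
  rfl

theorem exists_lap_le_of_lipschitzWith (hu : ContDiff ℝ 2 u) (hlip : LipschitzWith 1 u)
    (z : EuclideanSpace ℝ (Fin n)) {a : ℝ} (ha : 1 < a) :
    ∃ p ∈ ball z 1, lap u p ≤ 2 * a * n := by
  set w := fun x => u x - a * ‖x - z‖ ^ 2 with hw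
  obtain ⟨p, hpB, hpmax⟩ := (isCompact_closedBall z 1).exists_isMaxOn
    (nonempty_closedBall.2 zero_le_one) (by fun_prop : Continuous w).continuousOn
  -- on the sphere `w ≤ u z + 1 - a < w z`, so the maximum is interior
  have hp : p ∈ ball z 1 := by
    by_contra hp
    have hpz : ‖p - z‖ = 1 := by
      rw [← dist_eq_norm]
      exact le_antisymm (mem_closedBall.1 hpB) (not_lt.1 hp)
    have hwz : w z ≤ w p := hpmax (mem_closedBall_self zero_le_one)
    have := hlip.le_add_mul p z
    simp only [hw, hpz, sub_self, norm_zero, NNReal.coe_one, one_mul, dist_eq_norm] at hwz this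
    linarith
  refine ⟨p, hp, ?_⟩
  have hmax : IsLocalMax w p := hpmax.isLocalMax (closedBall_mem_nhds_of_mem hp)
  calc lap u p = ∑ i, secondDerivAlong u (EuclideanSpace.single i 1) p := rfl
    _ ≤ ∑ _i : Fin n, 2 * a := Finset.sum_le_sum fun i _ => by
      simpa using hmax.secondDerivAlong_le_of_sub_sq_norm hu (EuclideanSpace.single i 1)
    _ = 2 * a * n := by simp [mul_comm]

/-- Near `z / 2` there is a point `p` with `Δu p ≤ 4n`, where the inequality bounds `f p` from
below; convexity along `p = (z + (2p - z)) / 2` transfers this bound to `f z`. -/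
theorem exists_forall_le_of_le_lap_add (hu : ContDiff ℝ 2 u) (hlip : LipschitzWith 1 u) {m δ : ℝ}
    (hm : ∀ x, m ≤ u x) (hδ : 0 ≤ δ) (hf : ConvexOn ℝ univ f)
    (hsub : ∀ x, δ * u x ≤ lap u x + f x) : ∃ M, ∀ x, M ≤ f x := by
  have hfc : Continuous f := continuousOn_univ.1 (by simpa using hf.continuousOn_interior)
  obtain ⟨C, hC⟩ := (isCompact_closedBall (0 : EuclideanSpace ℝ (Fin n)) 2).bddAbove_image
    hfc.continuousOn
  refine ⟨2 * (δ * m - 2 * 2 * n) - C, fun z => ?_⟩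
  obtain ⟨p, hp, hlap⟩ := exists_lap_le_of_lipschitzWith hu hlip ((2 : ℝ)⁻¹ • z) one_lt_two
  have hy : f ((2 : ℝ) • p - z) ≤ C := by
    refine hC ⟨_, ?_, rfl⟩
    rw [mem_closedBall_zero_iff, show (2 : ℝ) • p - z = (2 : ℝ) • (p - (2 : ℝ)⁻¹ • z) by module,
      norm_smul, Real.norm_two]
    linarith [mem_ball_iff_norm.1 hp]
  have hmid : f p ≤ (2 : ℝ)⁻¹ * f z + (2 : ℝ)⁻¹ * f ((2 : ℝ) • p - z) := by
    have := hf.2 (mem_univ z) (mem_univ ((2 : ℝ) • p - z)) (by norm_num : (0 : ℝ) ≤ 2⁻¹)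
      (by norm_num : (0 : ℝ) ≤ 2⁻¹) (by norm_num)
    rwa [show (2 : ℝ)⁻¹ • z + (2 : ℝ)⁻¹ • ((2 : ℝ) • p - z) = p by module] at this
  nlinarith [hsub p, mul_le_mul_of_nonneg_left (hm p) hδ]

section Maximizer

variable {ε a b : ℝ} {p : EuclideanSpace ℝ (Fin n) × EuclideanSpace ℝ (Fin n)}

theorem IsLocalMax.convexityGap_lap_nonpos (h : IsLocalMax (convexityGap u ε a b) p)
    (hu : ContDiff ℝ 2 u) (hab : a + b = 1) : convexityGap (lap u) ε a b p ≤ 0 := by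
  rw [lap_eq_sum_secondDerivAlong, convexityGap_sum]
  exact Finset.sum_nonpos fun i _ => h.convexityGap_secondDerivAlong_nonpos hu hab _

/-- At a maximizer `(x, y)`, `Du x = Du y = ε Du (a x + b y)` has norm `< 1`, so `δ u = Δu + f`
holds with equality at `x` and `y`. -/
theorem IsLocalMax.mul_convexityGap_le (h : IsLocalMax (convexityGap u ε a b) p)
    (hu : ContDiff ℝ 2 u) (hf : ConvexOn ℝ univ f) {δ M : ℝ} (hM : ∀ x, M ≤ f x)
    (hgrad : ∀ x, ‖fderiv ℝ u x‖ ≤ 1) (hsub : ∀ x, δ * u x ≤ lap u x + f x)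
    (heqn : ∀ x, ‖fderiv ℝ u x‖ < 1 → δ * u x = lap u x + f x)
    (hε₀ : 0 ≤ ε) (hε₁ : ε < 1) (ha : 0 < a) (hb : 0 < b) (hab : a + b = 1) :
    δ * convexityGap u ε a b p ≤ (1 - ε) * -M := by
  have hu₁ : Differentiable ℝ u := hu.differentiable two_ne_zero
  have heq_of_fderiv : ∀ x, fderiv ℝ u x = ε • fderiv ℝ u (a • p.1 + b • p.2) →
      δ * u x = lap u x + f x := fun x hx => heqn x <| by
    rw [hx, norm_smul, Real.norm_of_nonneg hε₀]
    nlinarith [hgrad (a • p.1 + b • p.2)]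
  have hx := heq_of_fderiv _ (h.convexityGap_fderiv_fst hu₁ ha.ne')
  have hy := heq_of_fderiv _ (h.convexityGap_fderiv_snd hu₁ hb.ne')
  have hlap := h.convexityGap_lap_nonpos hu hab
  have hfz := hf.2 (mem_univ p.1) (mem_univ p.2) ha.le hb.le hab
  simp only [convexityGap, smul_eq_mul] at hlap hfz ⊢
  nlinarith [mul_le_mul_of_nonneg_left (hsub (a • p.1 + b • p.2)) hε₀,
    mul_le_mul_of_nonneg_left (hM (a • p.1 + b • p.2)) (sub_nonneg.2 hε₁.le)]

end Maximizer

end Euclidean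

theorem le_of_forall_mul_sub_le {δ L B M : ℝ} (hδ : 0 < δ)
    (h : ∀ ε ∈ Ioo (0 : ℝ) 1, δ * (ε * L - B) ≤ (1 - ε) * M) : L ≤ B := by
  have hlim : Tendsto (fun ε => δ * (ε * L - B) - (1 - ε) * M) (𝓝[<] 1) (𝓝 (δ * (L - B))) :=
    tendsto_nhdsWithin_of_tendsto_nhds <|
      (by fun_prop : Continuous fun ε => δ * (ε * L - B) - (1 - ε) * M).tendsto' 1 _ (by ring)
  have : δ * (L - B) ≤ 0 := le_of_tendsto hlim <| by
    filter_upwards [Ioo_mem_nhdsLT zero_lt_one] with ε hε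
    linarith [h ε hε]
  nlinarith

theorem stmt6 {n : ℕ} (δ : ℝ) (hδ : 0 < δ)
    (u f : EuclideanSpace ℝ (Fin n) → ℝ)
    (hu : ContDiff ℝ 2 u)
    (hfconv : ConvexOn ℝ Set.univ f)
    (heq : ∀ x, max (δ * u x - lap u x - f x) (‖gradient u x‖ - 1) = 0)
    (hgrow : Tendsto (fun x : EuclideanSpace ℝ (Fin n) => u x / ‖x‖)
      (cocompact (EuclideanSpace ℝ (Fin n))) (nhds 1)) :
    ConvexOn ℝ Set.univ u := by
  simp only [norm_gradient] at heq
  have hsub : ∀ x, δ * u x ≤ lap u x + f x := fun x => by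
    linarith [(max_le_iff.1 (heq x).le).1]
  have hgrad : ∀ x, ‖fderiv ℝ u x‖ ≤ 1 := fun x => by
    linarith [(max_le_iff.1 (heq x).le).2]
  have heqn : ∀ x, ‖fderiv ℝ u x‖ < 1 → δ * u x = lap u x + f x := fun x hx => by
    rcases max_eq_iff.1 (heq x) with h | h <;> linarith [h.1]
  have hlip : LipschitzWith 1 u := lipschitzWith_of_nnnorm_fderiv_le
    (hu.differentiable two_ne_zero) fun x => by simpa [← NNReal.coe_le_coe] using hgrad x
  obtain ⟨m, hm⟩ := exists_mul_norm_sub_le_of_tendsto_div_norm hu.continuous hgrow zero_lt_one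
  obtain ⟨M, hM⟩ := exists_forall_le_of_le_lap_add hu hlip (m := -m) (fun x => by
    linarith [hm x, norm_nonneg x]) hδ.le hfconv hsub
  refine convexOn_iff_forall_pos.2 ⟨convex_univ, fun x _ y _ a b ha hb hab => ?_⟩
  simp only [smul_eq_mul]
  refine le_of_forall_mul_sub_le hδ (M := -M) fun ε hε => ?_
  obtain ⟨C, hC⟩ := exists_mul_norm_sub_le_of_tendsto_div_norm hu.continuous hgrow
    (c := (1 + ε) / 2) (by linarith [hε.2])
  obtain ⟨p, hp⟩ := exists_forall_convexityGap_le hu.continuous hlip hC hε.1.le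
    (by linarith [hε.2]) ha hb
  have hmax : IsLocalMax (convexityGap u ε a b) p := Eventually.of_forall hp
  calc δ * (ε * u (a • x + b • y) - (a * u x + b * u y))
      = δ * convexityGap u ε a b (x, y) := rfl
    _ ≤ δ * convexityGap u ε a b p := mul_le_mul_of_nonneg_left (hp _) hδ.le
    _ ≤ (1 - ε) * -M :=
      hmax.mul_convexityGap_le hu hfconv hM hgrad hsub heqn hε.1.le hε.2 ha hb hab
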